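/- Let M ≥ 1 and 0 ≤ e < d be integers, and set c = C(M+d, d) − C(M+e, e). Then the sequence (c_j)_{j=e+1}^{d} defined by c_j = M + j − 1 is the d-decomposition of c, i.e., it satisfies c_d > c_{d−1} > ⋯ > c_{e+1} ≥ e+1 and c = Σ_{j=e+1}^{d} C(c_j, j); moreover the associated lowering satisfies c_{<d>} = Σ_{j=e+1}^{d} C(c_j − 1, j) = C(M−1+d, d) − C(M−1+e, e). -/

import Mathlib

/-!
By the hockey-stick identity `C(N + e, e) + ∑_{j=e+1}^{d} C(N + j - 1, j) = C(N + d, d)`, applied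
with `N = M` and `N = M - 1`, the entries `c_j = M + j - 1` decompose `c` and their lowering is
`C(M - 1 + d, d) - C(M - 1 + e, e)`. That this lowering is `c_{<d>}` rests on the uniqueness of
`d`-decompositions: the leading entry is pinned down by `C(c_d, d) ≤ c < C(c_d + 1, d)`, and one
inducts on `d` after removing the leading term.
-/

open Filter Finset
open scoped Classical

/-- `IsDDecomp d c r f` says that `f r < f (r+1) < ⋯ < f d` (with `f r ≥ r`, `1 ≤ r ≤ d`)
is a `d`-decomposition of `c`, i.e. `c = ∑_{i=r}^{d} C(f i, i)`. -/
def IsDDecomp (d c r : ℕ) (f : ℕ → ℕ) : Prop :=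
  1 ≤ r ∧ r ≤ d ∧ r ≤ f r ∧ (∀ i, r ≤ i → i < d → f i < f (i + 1)) ∧
    c = ∑ i ∈ Finset.Icc r d, Nat.choose (f i) i

/-- The lowering operation `c ↦ c_{<d>}`: given the `d`-decomposition
`c = ∑_{i=r}^{d} C(c_i, i)`, set `c_{<d>} = ∑_{i=r}^{d} C(c_i - 1, i)`;
by convention it is `0` when no `d`-decomposition exists (e.g. for `c = 0`). -/
noncomputable def lowerD (d c : ℕ) : ℕ :=
  if h : ∃ p : ℕ × (ℕ → ℕ), IsDDecomp d c p.1 p.2 then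
    ∑ i ∈ Finset.Icc h.choose.1 d, Nat.choose (h.choose.2 i - 1) i
  else 0

theorem choose_add_sum_Icc_choose_add_sub_one (N : ℕ) {e d : ℕ} (hed : e ≤ d) :
    (N + e).choose e + ∑ j ∈ Icc (e + 1) d, (N + j - 1).choose j = (N + d).choose d := by
  induction d, hed using Nat.le_induction with
  | base => simp
  | succ d hed ih =>
    rw [sum_Icc_succ_top (by omega), ← add_assoc, ih, ← add_assoc, Nat.add_sub_cancel,
      Nat.choose_succ_succ']

theorem sum_Icc_choose_lt_choose_succ {r : ℕ} (f : ℕ → ℕ) (hr : 1 ≤ r) {d : ℕ} (hrd : r ≤ d)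
    (hf : ∀ i, r ≤ i → i < d → f i < f (i + 1)) (hrf : r ≤ f r) :
    ∑ i ∈ Icc r d, (f i).choose i < (f d + 1).choose d := by
  induction d, hrd using Nat.le_induction with
  | base =>
    obtain ⟨r, rfl⟩ : ∃ k, r = k + 1 := ⟨r - 1, by omega⟩
    rw [Icc_self, sum_singleton, Nat.choose_succ_succ' (f _)]
    have : 0 < (f (r + 1)).choose r := Nat.choose_pos (by omega)
    omega
  | succ d hrd ih =>
    calc ∑ i ∈ Icc r (d + 1), (f i).choose i
        = ∑ i ∈ Icc r d, (f i).choose i + (f (d + 1)).choose (d + 1) :=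
          sum_Icc_succ_top (by omega) _
      _ < (f d + 1).choose d + (f (d + 1)).choose (d + 1) := by
          gcongr; exact ih fun i hi hid => hf i hi (by omega)
      _ ≤ (f (d + 1)).choose d + (f (d + 1)).choose (d + 1) := by
          gcongr; exact hf d hrd (by omega)
      _ = (f (d + 1) + 1).choose (d + 1) := (Nat.choose_succ_succ' _ _).symm

namespace IsDDecomp

variable {d c r : ℕ} {f : ℕ → ℕ}

theorem choose_le_of_mem (h : IsDDecomp d c r f) {i : ℕ} (hi : i ∈ Icc r d) :
    (f i).choose i ≤ c := by
  obtain ⟨-, -, -, -, rfl⟩ := h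
  exact single_le_sum (f := fun i => (f i).choose i) (by simp) hi

theorem choose_le (h : IsDDecomp d c r f) : (f d).choose d ≤ c :=
  h.choose_le_of_mem (right_mem_Icc.2 h.2.1)

theorem pos (h : IsDDecomp d c r f) : 0 < c :=
  (Nat.choose_pos h.2.2.1).trans_le (h.choose_le_of_mem (left_mem_Icc.2 h.2.1))

theorem lt_choose_succ (h : IsDDecomp d c r f) : c < (f d + 1).choose d := by
  obtain ⟨hr, hrd, hrf, hf, rfl⟩ := h
  exact sum_Icc_choose_lt_choose_succ f hr hrd hf hrf

theorem top_eq {s : ℕ} {g : ℕ → ℕ} (hf : IsDDecomp d c r f) (hg : IsDDecomp d c s g) :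
    f d = g d := by
  by_contra hne
  rcases Nat.lt_or_gt_of_ne hne with hlt | hlt
  · exact absurd (hf.lt_choose_succ.trans_le (Nat.choose_le_choose d hlt)) hg.choose_le.not_gt
  · exact absurd (hg.lt_choose_succ.trans_le (Nat.choose_le_choose d hlt)) hf.choose_le.not_gt

theorem tail (h : IsDDecomp (d + 1) c r f) (hrd : r ≤ d) :
    IsDDecomp d (c - (f (d + 1)).choose (d + 1)) r f := by
  obtain ⟨hr, -, hrf, hf, rfl⟩ := h
  refine ⟨hr, hrd, hrf, fun i hi hid => hf i hi (by omega), ?_⟩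
  rw [sum_Icc_succ_top (by omega), Nat.add_sub_cancel]

theorem choose_top_lt (h : IsDDecomp (d + 1) c r f) (hrd : r ≤ d) :
    (f (d + 1)).choose (d + 1) < c := by
  have := (h.tail hrd).pos
  omega

theorem eq_choose_top (h : IsDDecomp d c d f) : c = (f d).choose d := by
  rw [h.2.2.2.2, Icc_self, sum_singleton]

theorem unique {s : ℕ} {g : ℕ → ℕ} (hf : IsDDecomp d c r f) (hg : IsDDecomp d c s g) :
    r = s ∧ Set.EqOn f g (Icc r d) := by
  induction d generalizing c r s with
  | zero => exact absurd (hf.1.trans hf.2.1) (by omega)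
  | succ d ih =>
    have htop := hf.top_eq hg
    rcases Nat.lt_or_ge d r with hr | hr <;> rcases Nat.lt_or_ge d s with hs | hs
    · obtain rfl : r = d + 1 := by have := hf.2.1; omega
      obtain rfl : s = d + 1 := by have := hg.2.1; omega
      exact ⟨rfl, fun i hi => by rwa [Nat.le_antisymm (mem_Icc.1 hi).2 (mem_Icc.1 hi).1]⟩
    · obtain rfl : r = d + 1 := by have := hf.2.1; omega
      exact absurd hf.eq_choose_top (htop ▸ (hg.choose_top_lt hs).ne')
    · obtain rfl : s = d + 1 := by have := hg.2.1; omega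
      exact absurd hg.eq_choose_top (htop ▸ (hf.choose_top_lt hr).ne')
    · have hg' := hg.tail hs
      rw [← htop] at hg'
      obtain ⟨rfl, heq⟩ := ih (hf.tail hr) hg'
      refine ⟨rfl, fun i hi => ?_⟩
      rcases Nat.lt_or_ge d i with hi' | hi'
      · rwa [Nat.le_antisymm (mem_Icc.1 hi).2 hi']
      · exact heq (mem_Icc.2 ⟨(mem_Icc.1 hi).1, hi'⟩)

end IsDDecomp

theorem lowerD_eq {d c r : ℕ} {f : ℕ → ℕ} (h : IsDDecomp d c r f) :
    lowerD d c = ∑ i ∈ Icc r d, (f i - 1).choose i := by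
  have hex : ∃ p : ℕ × (ℕ → ℕ), IsDDecomp d c p.1 p.2 := ⟨(r, f), h⟩
  obtain ⟨rfl, heq⟩ := hex.choose_spec.unique h
  rw [lowerD, dif_pos hex]
  exact sum_congr rfl fun i hi => by rw [heq hi]

theorem stmt5 (M e d : ℕ) (hM : 1 ≤ M) (hed : e < d) :
    IsDDecomp d (Nat.choose (M + d) d - Nat.choose (M + e) e) (e + 1) (fun j => M + j - 1) ∧
    lowerD d (Nat.choose (M + d) d - Nat.choose (M + e) e) =
      ∑ j ∈ Finset.Icc (e + 1) d, Nat.choose (M + j - 1 - 1) j ∧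
    ∑ j ∈ Finset.Icc (e + 1) d, Nat.choose (M + j - 1 - 1) j =
      Nat.choose (M - 1 + d) d - Nat.choose (M - 1 + e) e := by
  have hdecomp : IsDDecomp d (Nat.choose (M + d) d - Nat.choose (M + e) e) (e + 1)
      (fun j => M + j - 1) := by
    have := choose_add_sum_Icc_choose_add_sub_one M hed.le
    refine ⟨by omega, hed, ?_, fun i _ _ => ?_, ?_⟩ <;> dsimp only <;> omega
  refine ⟨hdecomp, lowerD_eq hdecomp, ?_⟩
  have hshift : ∑ j ∈ Icc (e + 1) d, (M + j - 1 - 1).choose j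
      = ∑ j ∈ Icc (e + 1) d, (M - 1 + j - 1).choose j :=
    sum_congr rfl fun j _ => by congr 1; omega
  have := choose_add_sum_Icc_choose_add_sub_one (M - 1) hed.le
  omega
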